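/- arXiv:2201.12580 — 6 statements merged into one kernel-verified Lean document; each statement's English description precedes it below -/
import Mathlib

section
/- Let G be a group, φ : G → G a group automorphism, and w ∈ G. If the family {φ^i(w) : i ∈ ℕ} is a basis of a free subgroup of G (i.e., the elements freely generate a free subgroup), then the family {φ^i(w) : i ∈ ℤ} is also a basis of a free subgroup of G. -/
/-!
Shifting indices by `n` turns `FreeGroup ℕ` into the subgroup of `FreeGroup ℤ` generated by the
letters of index `≥ -n`, and on it the lift of `i ↦ φ^i w` is the lift of `i ↦ φ^i w` on `ℕ`
followed by the automorphism `φ^(-n)`. Every element of `FreeGroup ℤ` involves finitely many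
letters, hence lies in such a subgroup, so a nontrivial kernel element would give one for `ℕ`.
-/

namespace FreeGroup

theorem range_map_natCast_sub_mono :
    Monotone fun n : ℕ => (map fun k : ℕ => (k : ℤ) - n).range := by
  intro n m hnm
  simp only [range_map]
  refine Subgroup.closure_mono (Set.image_mono ?_)
  rintro _ ⟨k, rfl⟩
  exact ⟨k + (m - n), by push_cast; omega⟩

theorem exists_mem_range_map_natCast_sub (x : FreeGroup ℤ) :
    ∃ n : ℕ, x ∈ (map fun k : ℕ => (k : ℤ) - n).range := by
  rw [← Subgroup.mem_iSup_of_directed range_map_natCast_sub_mono.directed_le]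
  suffices ⊤ ≤ ⨆ n : ℕ, (map fun k : ℕ => (k : ℤ) - n).range from this (Subgroup.mem_top x)
  rw [← closure_range_of, Subgroup.closure_le]
  rintro _ ⟨i, rfl⟩
  refine Subgroup.mem_iSup_of_mem (-i).toNat ⟨of (i + (-i).toNat).toNat, ?_⟩
  rw [map.of]
  congr 1
  omega

end FreeGroup

theorem MulAut.zpow_natCast_comp_lift_comp_map_sub {G : Type*} [Group G] (φ : MulAut G) (w : G)
    (n : ℕ) :
    (φ ^ (n : ℤ)).toMonoidHom.comp ((FreeGroup.lift fun i : ℤ => (φ ^ i) w).comp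
      (FreeGroup.map fun k : ℕ => (k : ℤ) - n)) = FreeGroup.lift fun i : ℕ => (φ ^ i) w := by
  refine FreeGroup.ext_hom _ _ fun k => ?_
  simp only [MonoidHom.comp_apply, FreeGroup.map.of, FreeGroup.lift_apply_of,
    MulEquiv.coe_toMonoidHom]
  rw [← MulAut.mul_apply, ← zpow_add, add_sub_cancel, zpow_natCast]

/-- if `{φ^i(w) : i ∈ ℕ}` is a basis of a free subgroup of `G`,
then `{φ^i(w) : i ∈ ℤ}` is a basis of a free subgroup of `G`. -/
theorem stmt_0 {G : Type*} [Group G] (φ : MulAut G) (w : G)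
    (h : Function.Injective
      (FreeGroup.lift (fun i : ℕ => (φ ^ i) w) : FreeGroup ℕ →* G)) :
    Function.Injective
      (FreeGroup.lift (fun i : ℤ => (φ ^ i) w) : FreeGroup ℤ →* G) := by
  rw [injective_iff_map_eq_one] at h ⊢
  intro x hx
  obtain ⟨n, y, rfl⟩ := FreeGroup.exists_mem_range_map_natCast_sub x
  have hy : FreeGroup.lift (fun i : ℕ => (φ ^ i) w) y = 1 := by
    rw [← φ.zpow_natCast_comp_lift_comp_map_sub w n]
    simp only [MonoidHom.comp_apply, hx, map_one]
  rw [h y hy, map_one]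
end

section
/- Let G be a group and t, w ∈ G. If the family {t^i w t^{-i} : i ∈ ℕ} freely generates a free subgroup of G, then the family {t^i w t^{-i} : i ∈ ℤ} freely generates a free subgroup of G. -/
/-!
A word in the generators indexed by `ℤ` involves only finitely many indices, so shifting every
index by a large `m` turns it into a word in the generators indexed by `ℕ`. In `G` this shift is
conjugation by `t ^ m`, which preserves being trivial, and on the free group it is injective.
-/

namespace FreeGroup

variable {α β G : Type*} [Group G]

theorem lift_map_apply (f : β → G) (g : α → β) (x : FreeGroup α) :
    lift f (map g x) = lift (f ∘ g) x :=
  lift_unique ((lift f).comp (map g)) (by simp)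

theorem lift_map_eq_conj {f : α → G} {σ : α → α} {c : G}
    (hf : ∀ i, f (σ i) = c * f i * c⁻¹) (x : FreeGroup α) :
    lift f (map σ x) = c * lift f x * c⁻¹ := by
  rw [lift_map_apply]
  exact (lift_unique ((MulAut.conj c).toMonoidHom.comp (lift f)) (by simp [hf])).symm

theorem eventually_map_add_mem_range_map_natCast (x : FreeGroup ℤ) :
    ∀ᶠ m : ℕ in Filter.atTop, map (· + (m : ℤ)) x ∈ (map ((↑) : ℕ → ℤ)).range := by
  induction x with
  | C1 => exact Filter.Eventually.of_forall fun _ => by simp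
  | of i =>
    filter_upwards [Filter.eventually_ge_atTop i.natAbs] with m hm
    exact ⟨of (i + m).toNat, by rw [map.of, map.of, Int.toNat_of_nonneg (by omega)]⟩
  | inv_of i hi =>
    filter_upwards [hi] with m hm
    simpa using inv_mem hm
  | mul x y hx hy =>
    filter_upwards [hx, hy] with m hxm hym
    simpa using mul_mem hxm hym

end FreeGroup

/-- if `{t^i w t^{-i} : i ∈ ℕ}` freely generates a free subgroup,
then so does `{t^i w t^{-i} : i ∈ ℤ}`. -/
theorem stmt_1 {G : Type*} [Group G] (t w : G)
    (h : Function.Injective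
      (FreeGroup.lift (fun i : ℕ => t ^ i * w * (t ^ i)⁻¹) : FreeGroup ℕ →* G)) :
    Function.Injective
      (FreeGroup.lift (fun i : ℤ => t ^ i * w * (t ^ i)⁻¹) : FreeGroup ℤ →* G) := by
  set f : ℤ → G := fun i => t ^ i * w * (t ^ i)⁻¹
  rw [injective_iff_map_eq_one]
  intro x hx
  obtain ⟨m, y, hy⟩ := (FreeGroup.eventually_map_add_mem_range_map_natCast x).exists
  have hshift : FreeGroup.lift f (FreeGroup.map (· + (m : ℤ)) x) = 1 := by
    rw [FreeGroup.lift_map_eq_conj (c := t ^ (m : ℤ)) (fun i => by simp only [f, zpow_add]; group),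
      hx]
    group
  have hy1 : y = 1 := h <| by
    rw [MonoidHom.map_one, ← hshift, ← hy, FreeGroup.lift_map_apply, Function.comp_def]
    simp only [f, zpow_natCast]
  apply FreeGroup.map_injective (add_left_injective (m : ℤ))
  rw [← hy, hy1, MonoidHom.map_one, MonoidHom.map_one]
end

section
/- Let H be a group generated by two elements w and t, and suppose there is a homomorphism ρ : H → ℤ with ρ(t) = 1 and ρ(w) = 0. If the family {t^i w t^{-i} : i ∈ ℤ} is a basis of a free subgroup of H, then H is a free group of rank 2 (freely generated by w and t). -/
/-!
Let `F` be free on `ω, τ`, mapping to `w, t`, and `φ = ρ ∘ L : F → ℤ`. Conjugation by `τ` shifts the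
family `τ^i ω τ^{-i}`, so the subgroup `K` it generates is normalised by `τ`; together with `τ` it
generates `F`, hence `F = K · ⟨τ⟩`, and since `K ≤ ker φ` while `φ τ = 1`, this forces `ker φ ≤ K`.
A word killed by `L` therefore lies in `K`, where `L` restricts to the injective map of the
hypothesis.
-/

open Subgroup

section
variable {G : Type*} [Group G]

theorem Subgroup.ker_le_of_sup_zpowers_eq_top {K : Subgroup G} {τ : G} (hτ : τ ∈ normalizer (K : Set G))
    (φ : G →* Multiplicative ℤ) (hφτ : φ τ = Multiplicative.ofAdd 1) (hK : K ≤ φ.ker)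
    (hsup : K ⊔ zpowers τ = ⊤) : φ.ker ≤ K := by
  intro x hx
  have hx' : x ∈ ((K ⊔ zpowers τ : Subgroup G) : Set G) := by simp [hsup]
  rw [coe_mul_of_right_le_normalizer_left _ _ (zpowers_le.2 hτ)] at hx'
  obtain ⟨k, hk, _, ⟨n, rfl⟩, rfl⟩ := Set.mem_mul.1 hx'
  have hn : n = 0 := by
    simpa [MonoidHom.mem_ker.1 (hK hk), hφτ, ← ofAdd_zsmul] using MonoidHom.mem_ker.1 hx
  simpa [hn] using hk

theorem zpow_mem_normalizer_closure_range_conj (ω τ : G) :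
    τ ∈ normalizer (closure (Set.range fun i : ℤ => τ ^ i * ω * (τ ^ i)⁻¹) : Set G) := by
  refine normalizer_le_normalizer_closure _ (mem_normalizer_iff_conj_image_eq.2 ?_)
  have hshift : (MulAut.conj τ ∘ fun i : ℤ => τ ^ i * ω * (τ ^ i)⁻¹) =
      (fun i : ℤ => τ ^ i * ω * (τ ^ i)⁻¹) ∘ (1 + ·) := by
    funext i
    simp only [Function.comp_apply, MulAut.conj_apply, zpow_add, zpow_one]
    group
  rw [← Set.range_comp, hshift, (add_left_surjective 1).range_comp]

theorem ker_le_closure_range_conj {ω τ : G} (hgen : closure ({ω, τ} : Set G) = ⊤)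
    (φ : G →* Multiplicative ℤ) (hφτ : φ τ = Multiplicative.ofAdd 1) (hφω : φ ω = 1) :
    φ.ker ≤ closure (Set.range fun i : ℤ => τ ^ i * ω * (τ ^ i)⁻¹) := by
  refine ker_le_of_sup_zpowers_eq_top (zpow_mem_normalizer_closure_range_conj ω τ) φ hφτ ?_ ?_
  · rw [closure_le]
    rintro _ ⟨i, rfl⟩
    simp [hφω]
  · rw [eq_top_iff, ← hgen, closure_le, Set.pair_subset_iff]
    exact ⟨mem_sup_left (subset_closure ⟨0, by simp⟩), mem_sup_right (mem_zpowers τ)⟩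

end

/-- if moreover `{t^i w t^{-i} : i ∈ ℤ}` is a basis of a free subgroup,
then `H` is free of rank 2, freely generated by `w` and `t`. -/
theorem stmt_3 {H : Type*} [Group H] (w t : H)
    (hgen : Subgroup.closure ({w, t} : Set H) = ⊤)
    (ρ : H →* Multiplicative ℤ)
    (hρt : ρ t = Multiplicative.ofAdd 1) (hρw : ρ w = 1)
    (hfree : Function.Injective
      (FreeGroup.lift (fun i : ℤ => t ^ i * w * (t ^ i)⁻¹) : FreeGroup ℤ →* H)) :
    Function.Bijective
      (FreeGroup.lift (fun b : Bool => if b then w else t) : FreeGroup Bool →* H) := by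
  set L : FreeGroup Bool →* H := FreeGroup.lift fun b => if b then w else t
  refine ⟨(injective_iff_map_eq_one L).2 fun x hx => ?_, ?_⟩
  · have hgenF : closure ({.of true, .of false} : Set (FreeGroup Bool)) = ⊤ := by
      rw [Set.pair_comm, ← Bool.range_eq, FreeGroup.closure_range_of]
    have hxK : x ∈ _ := ker_le_closure_range_conj hgenF (ρ.comp L)
      (by simp [L, hρt]) (by simp [L, hρw]) (MonoidHom.mem_ker.2 (by simp [hx]))
    rw [← FreeGroup.range_lift_eq_closure] at hxK
    obtain ⟨g, rfl⟩ := hxK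
    have hcomp : L.comp (FreeGroup.lift fun i : ℤ => .of false ^ i * .of true * (.of false ^ i)⁻¹) =
        FreeGroup.lift fun i : ℤ => t ^ i * w * (t ^ i)⁻¹ :=
      FreeGroup.ext_hom _ _ fun i => by simp [L]
    rw [← MonoidHom.comp_apply, hcomp] at hx
    rw [hfree (hx.trans (map_one _).symm), map_one]
  · rw [← MonoidHom.range_eq_top, FreeGroup.range_lift_eq_closure, Bool.range_eq]
    simpa [Set.pair_comm] using hgen
end

section
/- Let F be a free group, H a nontrivial subgroup of F, and f ∈ F an element such that f H f^{-1} ⊆ H but f^n ∉ H for all n > 0. Then H is not finitely generated. -/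
/-!
Let `N = ⋃ₙ f⁻ⁿ H fⁿ`, an ascending union since `f H f⁻¹ ≤ H`. In the subgroup `K = H ⊔ ⟨f⟩`,
which is free by Nielsen–Schreier, `N` is normal and `K ⧸ N` is infinite cyclic generated by `f`
(as `fⁿ ∉ H`), so there is `π : K → ℤ` with kernel `N` and `π f = 1`. The Fox derivatives of `K`,
reduced along `π`, form a crossed homomorphism `δ : K → ℚ[T;T⁻¹]^(basis)`, additive on `ker π` and
with `δ (f g f⁻¹) = T • δ g` there. If `H` were finitely generated, `δ(H)` would span a
finite-dimensional `ℚ`-space containing `Tⁿ • δ h` for all `n`; as the `Tⁿ`-translates of a nonzero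
vector of a torsion-free `ℚ[T;T⁻¹]`-module are linearly independent, `δ = 0` on `H`, hence on
`N = ker π`. But if `ker π ≠ 1`, then either a generator lies in `ker π`, or there are two distinct
generators and `δ` does not vanish on their commutator; so `ker π`, and with it `H`, is trivial.
-/

open LaurentPolynomial Multiplicative Subgroup
open scoped commutatorElement

namespace LaurentPolynomial

theorem linearIndependent_T_natCast (K : Type*) [Field K] :
    LinearIndependent K (fun n : ℕ => (T n : K[T;T⁻¹])) :=
  (AddMonoidAlgebra.basis ℤ K).linearIndependent.comp _ Nat.cast_injective

theorem eq_zero_of_forall_T_smul_mem {K M : Type*} [Field K] [AddCommGroup M]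
    [Module K[T;T⁻¹] M] [Module K M] [IsScalarTower K K[T;T⁻¹] M]
    [Module.IsTorsionFree K[T;T⁻¹] M] {V : Submodule K M} [Module.Finite K V] {x : M}
    (hx : ∀ n : ℕ, (T n : K[T;T⁻¹]) • x ∈ V) : x = 0 := by
  by_contra hx0
  have hinj : ((LinearMap.toSpanSingleton K[T;T⁻¹] M x).restrictScalars K).ker = ⊥ :=
    LinearMap.ker_eq_bot.2 (smul_left_injective K[T;T⁻¹] hx0)
  have hli : LinearIndependent K (fun n : ℕ => (T n : K[T;T⁻¹]) • x) :=
    (linearIndependent_T_natCast K).map' _ hinj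
  have hliV : LinearIndependent K (fun n : ℕ => (⟨(T n : K[T;T⁻¹]) • x, hx n⟩ : V)) :=
    .of_comp V.subtype hli
  have := hliV.finite
  exact not_finite ℕ

noncomputable def smulTAut (ι : Type*) :
    Multiplicative ℤ →* MulAut (Multiplicative (ι →₀ ℚ[T;T⁻¹])) :=
  (MulAutMultiplicative _).symm.toMonoidHom.comp
    ((DistribMulAction.toAddAut ℚ[T;T⁻¹]ˣ _).comp (AddMonoidAlgebra.of ℚ ℤ).toHomUnits)

lemma smulTAut_apply {ι : Type*} (n : Multiplicative ℤ) (x : Multiplicative (ι →₀ ℚ[T;T⁻¹])) :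
    smulTAut ι n x = ofAdd ((T n.toAdd : ℚ[T;T⁻¹]) • x.toAdd) :=
  rfl

end LaurentPolynomial

namespace Subgroup

variable {G : Type*} [Group G] {H : Subgroup G} {f : G}

lemma conj_pow_mem (hconj : ∀ h ∈ H, f * h * f⁻¹ ∈ H) (n : ℕ) {h : G} (hh : h ∈ H) :
    f ^ n * h * (f ^ n)⁻¹ ∈ H := by
  induction n with
  | zero => simpa using hh
  | succ n ih => simpa [pow_succ', mul_assoc] using hconj _ ih

lemma mem_iSup_comap_conj_pow (hconj : ∀ h ∈ H, f * h * f⁻¹ ∈ H) {g : G} :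
    g ∈ ⨆ n : ℕ, H.comap (MulAut.conj (f ^ n)).toMonoidHom ↔
      ∃ n : ℕ, f ^ n * g * (f ^ n)⁻¹ ∈ H := by
  have hmono : Monotone fun n : ℕ => H.comap (MulAut.conj (f ^ n)).toMonoidHom :=
    monotone_nat_of_le_succ fun n x hx => by simpa [pow_succ', mul_assoc] using hconj _ hx
  rw [mem_iSup_of_directed hmono.directed_le]
  simp only [mem_comap, MulEquiv.coe_toMonoidHom, MulAut.conj_apply]

lemma normal_iSup_comap_conj_pow (hconj : ∀ h ∈ H, f * h * f⁻¹ ∈ H) (htop : H ⊔ zpowers f = ⊤) :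
    (⨆ n : ℕ, H.comap (MulAut.conj (f ^ n)).toMonoidHom).Normal := by
  set N := ⨆ n : ℕ, H.comap (MulAut.conj (f ^ n)).toMonoidHom
  have hN (g : G) : g ∈ N ↔ ∃ n : ℕ, f ^ n * g * (f ^ n)⁻¹ ∈ H := mem_iSup_comap_conj_pow hconj
  have hHN : ∀ h ∈ H, ∀ g ∈ N, h * g * h⁻¹ ∈ N := by
    intro h hh g hg
    obtain ⟨n, hn⟩ := (hN g).1 hg
    refine (hN _).2 ⟨n, ?_⟩
    have hconj_n := conj_pow_mem hconj n hh
    convert mul_mem (mul_mem hconj_n hn) (inv_mem hconj_n) using 1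
    group
  have hHnorm : H ≤ normalizer N := fun h hh => mem_normalizer_iff.2 fun g =>
    ⟨hHN h hh g, fun hg => by convert hHN h⁻¹ (inv_mem hh) _ hg using 1; group⟩
  have hfnorm : f ∈ normalizer N := mem_normalizer_iff.2 fun g => by
    rw [hN, hN]
    constructor
    · rintro ⟨n, hn⟩
      exact ⟨n, by convert hconj _ hn using 1; group⟩
    · rintro ⟨n, hn⟩
      exact ⟨n + 1, by convert hn using 1; group⟩
  exact normalizer_eq_top_iff.1 (eq_top_mono (sup_le hHnorm (zpowers_le.2 hfnorm)) htop)

lemma eq_zero_of_zpow_mem (hf : ∀ n : ℕ, 0 < n → f ^ n ∉ H) {n : ℤ} (hn : f ^ n ∈ H) : n = 0 := by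
  by_contra hn0
  refine hf n.natAbs (Int.natAbs_pos.2 hn0) ?_
  rcases Int.natAbs_eq n with h | h
  · rwa [h, zpow_natCast] at hn
  · rwa [h, zpow_neg, zpow_natCast, inv_mem_iff] at hn

lemma FG.subgroupOf {K : Subgroup G} (hH : H.FG) (hHK : H ≤ K) : (H.subgroupOf K).FG := by
  rw [← Group.fg_iff_subgroup_fg] at hH ⊢
  exact Group.fg_of_surjective (f := (subgroupOfEquivOfLe hHK).symm.toMonoidHom)
    (subgroupOfEquivOfLe hHK).symm.surjective

lemma subgroupOf_sup_zpowers_eq_top (H : Subgroup G) (f : G) :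
    H.subgroupOf (H ⊔ zpowers f) ⊔ zpowers ⟨f, mem_sup_right (mem_zpowers f)⟩ = ⊤ := by
  refine map_injective (H ⊔ zpowers f).subtype_injective ?_
  rw [Subgroup.map_sup, map_subgroupOf_eq_of_le le_sup_left, MonoidHom.map_zpowers,
    ← MonoidHom.range_eq_map, range_subtype]
  rfl

end Subgroup

theorem exists_ker_eq_of_sup_zpowers_eq_top {G : Type*} [Group G] {N : Subgroup G} [N.Normal]
    {f : G} (htop : N ⊔ zpowers f = ⊤) (hf : ∀ n : ℤ, f ^ n ∈ N → n = 0) :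
    ∃ π : G →* Multiplicative ℤ, π.ker = N ∧ π f = ofAdd 1 := by
  let e := zpowersHom (G ⧸ N) (f : G ⧸ N)
  have he_inj : Function.Injective e := (injective_iff_map_eq_one e).2 fun n hn => by
    rw [zpowersHom_apply, ← QuotientGroup.mk_zpow, QuotientGroup.eq_one_iff] at hn
    exact toAdd_eq_zero.1 (hf _ hn)
  have he_surj : Function.Surjective e := by
    rw [← MonoidHom.range_eq_top, range_zpowersHom]
    calc zpowers (f : G ⧸ N) = (N ⊔ zpowers f).map (QuotientGroup.mk' N) := by
          rw [Subgroup.map_sup, QuotientGroup.map_mk'_self, bot_sup_eq, MonoidHom.map_zpowers]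
          rfl
      _ = ⊤ := by rw [htop, map_top_of_surjective _ (QuotientGroup.mk'_surjective N)]
  let e' := MulEquiv.ofBijective e ⟨he_inj, he_surj⟩
  refine ⟨e'.symm.toMonoidHom.comp (QuotientGroup.mk' N), ?_, ?_⟩
  · rw [MonoidHom.ker_comp_of_injective _ _ e'.symm.injective, QuotientGroup.ker_mk']
  · exact e'.symm_apply_eq.2 (zpow_one _).symm

namespace IsFreeGroup

variable {G : Type*} [Group G] [IsFreeGroup G]

lemma ker_eq_bot_of_subsingleton [Subsingleton (Generators G)] {π : G →* Multiplicative ℤ}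
    (hπ : ∀ a, π (of a) ≠ 1) : π.ker = ⊥ := by
  rcases isEmpty_or_nonempty (Generators G) with _ | ⟨⟨a₀⟩⟩
  · have hid : MonoidHom.id G = 1 := ext_hom isEmptyElim
    exact eq_bot_iff.2 fun g _ => DFunLike.congr_fun hid g
  · have hpow (g : G) : of a₀ ^ (lift (fun _ => ofAdd (1 : ℤ)) g).toAdd = g := by
      have : (zpowersHom G (of a₀)).comp (lift fun _ => ofAdd (1 : ℤ)) = MonoidHom.id G :=
        ext_hom fun a => by simp [lift_of, Subsingleton.elim a a₀]
      exact DFunLike.congr_fun this g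
    refine eq_bot_iff.2 fun g hg => ?_
    rw [← hpow g] at hg ⊢
    rw [MonoidHom.mem_ker, map_zpow, IsMulTorsionFree.zpow_eq_one_iff_right (hπ a₀)] at hg
    rw [hg, zpow_zero]
    exact one_mem _

variable (π : G →* Multiplicative ℤ)

noncomputable def foxHom :
    G →* Multiplicative (Generators G →₀ ℚ[T;T⁻¹]) ⋊[smulTAut _] Multiplicative ℤ :=
  lift fun a =>
    SemidirectProduct.inl (ofAdd (Finsupp.single a 1)) * SemidirectProduct.inr (π (of a))

lemma right_foxHom (g : G) : (foxHom π g).right = π g := by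
  suffices SemidirectProduct.rightHom.comp (foxHom π) = π from DFunLike.congr_fun this g
  exact ext_hom fun a => by simp [foxHom, lift_of]

/-- The Fox derivatives `∂g/∂a` along the generators `a`, pushed forward along `π` to
`ℚ[T;T⁻¹] = ℚ[ℤ]`. -/
noncomputable def foxDeriv (g : G) : Generators G →₀ ℚ[T;T⁻¹] := (foxHom π g).left.toAdd

lemma foxDeriv_mul (g h : G) :
    foxDeriv π (g * h) = foxDeriv π g + (T (π g).toAdd : ℚ[T;T⁻¹]) • foxDeriv π h := by
  simp only [foxDeriv, map_mul, SemidirectProduct.mul_left, right_foxHom, smulTAut_apply]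
  rfl

@[simp] lemma foxDeriv_one : foxDeriv π 1 = 0 := by simp [foxDeriv]

@[simp] lemma foxDeriv_of (a : Generators G) : foxDeriv π (of a) = Finsupp.single a 1 := by
  simp [foxDeriv, foxHom, lift_of]

lemma foxDeriv_inv (g : G) :
    foxDeriv π g⁻¹ = -((T (π g⁻¹).toAdd : ℚ[T;T⁻¹]) • foxDeriv π g) :=
  eq_neg_of_add_eq_zero_left (by rw [← foxDeriv_mul, inv_mul_cancel, foxDeriv_one])

lemma foxDeriv_mul_of_mem_ker {g : G} (hg : g ∈ π.ker) (h : G) :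
    foxDeriv π (g * h) = foxDeriv π g + foxDeriv π h := by
  rw [foxDeriv_mul, MonoidHom.mem_ker.1 hg, toAdd_one, T_zero, one_smul]

lemma foxDeriv_inv_of_mem_ker {g : G} (hg : g ∈ π.ker) : foxDeriv π g⁻¹ = -foxDeriv π g :=
  eq_neg_of_add_eq_zero_right
    (by rw [← foxDeriv_mul_of_mem_ker π hg, mul_inv_cancel, foxDeriv_one])

lemma foxDeriv_conj_of_mem_ker (f : G) {g : G} (hg : g ∈ π.ker) :
    foxDeriv π (f * g * f⁻¹) = (T (π f).toAdd : ℚ[T;T⁻¹]) • foxDeriv π g := by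
  have hff : foxDeriv π f + (T (π f).toAdd : ℚ[T;T⁻¹]) • foxDeriv π f⁻¹ = 0 := by
    rw [← foxDeriv_mul, mul_inv_cancel, foxDeriv_one]
  rw [mul_assoc, foxDeriv_mul, foxDeriv_mul_of_mem_ker π hg, smul_add, add_left_comm, hff,
    add_zero]

lemma foxDeriv_commutatorElement (x y : G) :
    foxDeriv π ⁅x, y⁆ = (1 - (T (π y).toAdd : ℚ[T;T⁻¹])) • foxDeriv π x +
      ((T (π x).toAdd : ℚ[T;T⁻¹]) - 1) • foxDeriv π y := by
  simp only [commutatorElement_def, foxDeriv_mul, foxDeriv_inv, map_mul, map_inv, toAdd_mul,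
    toAdd_inv, smul_neg, smul_smul, ← T_add]
  rw [add_neg_cancel_comm, add_neg_cancel, T_zero, one_smul]
  module

lemma foxDeriv_mem_span_of_mem_closure {S : Set G} (hS : closure S ≤ π.ker) {g : G}
    (hg : g ∈ closure S) : foxDeriv π g ∈ Submodule.span ℚ (foxDeriv π '' S) := by
  induction hg using closure_induction with
  | mem x hx => exact Submodule.subset_span (Set.mem_image_of_mem _ hx)
  | one => simp
  | mul x y hx _ ihx ihy => rw [foxDeriv_mul_of_mem_ker π (hS hx)]; exact add_mem ihx ihy
  | inv x hx ihx => rw [foxDeriv_inv_of_mem_ker π (hS hx)]; exact neg_mem ihx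

theorem foxDeriv_eq_zero_of_fg {H : Subgroup G} (hFG : H.FG) (hker : H ≤ π.ker) {f : G}
    (hf : π f = ofAdd 1) (hconj : ∀ h ∈ H, f * h * f⁻¹ ∈ H) {h : G} (hh : h ∈ H) :
    foxDeriv π h = 0 := by
  obtain ⟨S, rfl⟩ := hFG
  have : Module.Finite ℚ (Submodule.span ℚ (foxDeriv π '' S)) :=
    Module.Finite.span_of_finite ℚ (S.finite_toSet.image _)
  refine eq_zero_of_forall_T_smul_mem (V := Submodule.span ℚ (foxDeriv π '' S)) fun n => ?_
  have hconj_n := foxDeriv_conj_of_mem_ker π (f ^ n) (hker hh)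
  simp only [map_pow, hf, toAdd_pow, toAdd_ofAdd, nsmul_one] at hconj_n
  rw [← hconj_n]
  exact foxDeriv_mem_span_of_mem_closure π hker (conj_pow_mem hconj n hh)

theorem ker_eq_bot_of_foxDeriv_eq_zero (h : ∀ g ∈ π.ker, foxDeriv π g = 0) : π.ker = ⊥ := by
  have hπ (a : Generators G) : π (of a) ≠ 1 := fun ha => by simpa using h (of a) ha
  rcases subsingleton_or_nontrivial (Generators G) with _ | ⟨a, b, hab⟩
  · exact ker_eq_bot_of_subsingleton hπ
  exfalso
  have hcomm : ⁅of a, of b⁆ ∈ π.ker := by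
    simp [map_commutatorElement, commutatorElement_eq_one_iff_commute, Commute.all]
  -- the `a`-coordinate of `foxDeriv π ⁅of a, of b⁆` is `1 - T (π (of b))`
  have hcoeff := congr($(h _ hcomm) a)
  simp only [foxDeriv_commutatorElement, foxDeriv_of, Finsupp.add_apply, Finsupp.smul_apply,
    Finsupp.single_eq_same, Finsupp.single_eq_of_ne hab, Finsupp.coe_zero, Pi.zero_apply,
    smul_eq_mul, mul_one, mul_zero, add_zero] at hcoeff
  rw [sub_eq_zero, ← T_zero] at hcoeff
  exact hπ b (toAdd_eq_zero.1 ((AddMonoidAlgebra.single_left_inj one_ne_zero).1 hcoeff).symm)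

theorem eq_bot_of_fg_of_ker_le {H : Subgroup G} (hFG : H.FG) {f : G} (hf : π f = ofAdd 1)
    (hHker : H ≤ π.ker) (hconj : ∀ h ∈ H, f * h * f⁻¹ ∈ H)
    (hker : ∀ g ∈ π.ker, ∃ n : ℕ, f ^ n * g * (f ^ n)⁻¹ ∈ H) : H = ⊥ := by
  refine eq_bot_mono hHker (ker_eq_bot_of_foxDeriv_eq_zero π fun g hg => ?_)
  obtain ⟨n, hn⟩ := hker g hg
  have h0 := foxDeriv_eq_zero_of_fg π hFG hHker hf hconj hn
  rwa [foxDeriv_conj_of_mem_ker π _ hg, (isUnit_T _).smul_eq_zero] at h0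

theorem eq_bot_of_fg_of_sup_zpowers_eq_top {H : Subgroup G} (hFG : H.FG) {f : G}
    (hconj : ∀ h ∈ H, f * h * f⁻¹ ∈ H) (hf : ∀ n : ℕ, 0 < n → f ^ n ∉ H)
    (htop : H ⊔ zpowers f = ⊤) : H = ⊥ := by
  set N := ⨆ n : ℕ, H.comap (MulAut.conj (f ^ n)).toMonoidHom
  have hN (g : G) : g ∈ N ↔ ∃ n : ℕ, f ^ n * g * (f ^ n)⁻¹ ∈ H := mem_iSup_comap_conj_pow hconj
  have hHN : H ≤ N := fun h hh => (hN h).2 ⟨0, by simpa using hh⟩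
  have : N.Normal := normal_iSup_comap_conj_pow hconj htop
  have hfN (n : ℤ) (hn : f ^ n ∈ N) : n = 0 := by
    obtain ⟨m, hm⟩ := (hN _).1 hn
    exact eq_zero_of_zpow_mem hf (by convert hm using 1; group)
  obtain ⟨π, hker, hπf⟩ :=
    exists_ker_eq_of_sup_zpowers_eq_top (eq_top_mono (sup_le_sup_right hHN _) htop) hfN
  exact eq_bot_of_fg_of_ker_le π hFG hπf (hker ▸ hHN) hconj fun g hg => (hN g).1 (hker ▸ hg)

end IsFreeGroup

/-- a nontrivial subgroup `H` of a free group that is conjugated into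
itself by `f` with `f^n ∉ H` for all `n > 0` is not finitely generated. -/
theorem stmt_4 {α : Type*} (H : Subgroup (FreeGroup α)) (hH : H ≠ ⊥)
    (f : FreeGroup α)
    (hconj : ∀ h ∈ H, f * h * f⁻¹ ∈ H)
    (hf : ∀ n : ℕ, 0 < n → f ^ n ∉ H) :
    ¬ H.FG := by
  intro hFG
  have hHK : H ≤ H ⊔ zpowers f := le_sup_left
  have hbot := IsFreeGroup.eq_bot_of_fg_of_sup_zpowers_eq_top (hFG.subgroupOf hHK)
    (f := ⟨f, mem_sup_right (mem_zpowers f)⟩) (fun h hh => hconj _ hh) (fun n hn => hf n hn)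
    (subgroupOf_sup_zpowers_eq_top H f)
  exact hH ((subgroupOf_eq_bot.1 hbot).eq_bot_of_le hHK)
end

section
/- The group F × ℤ, where F is a finitely generated free group of rank ≥ 2, fails the finitely generated intersection property: there exist finitely generated subgroups H and K of F × ℤ such that H ∩ K is not finitely generated. -/
/-! In `F × ℤ`, the subgroup `F × 1` meets the graph of a homomorphism `φ : F → ℤ` in `ker φ × 1`.
Take `φ` sending a basis element `a` to `1` and the others to `0`. It is the projection of the
homomorphism `F → ℤ ≀ ℤ` sending `a` to the generator of the top group and another basis element `b`
to the unit lamp at the origin; this homomorphism maps `ker φ` into the base group `ℤ^(ℤ)` and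
`aⁿ b a⁻ⁿ` to the unit lamp at `n`. The supports of the elements of a finitely generated subgroup of
`ℤ^(ℤ)` lie in one finite set, so `ker φ` is not finitely generated.
-/

open Finsupp SemidirectProduct

namespace Subgroup

variable {G G' : Type*} [Group G] [Group G']

theorem FG.map {P : Subgroup G} (hP : P.FG) (f : G →* G') : (P.map f).FG := by
  classical
  obtain ⟨s, rfl⟩ := hP
  exact ⟨s.image f, by rw [Finset.coe_image, MonoidHom.map_closure]⟩

theorem FG.of_map_injective {P : Subgroup G} {f : G →* G'} (hf : Function.Injective f)
    (h : (P.map f).FG) : P.FG := by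
  rw [fg_iff_submonoid_fg] at h ⊢
  exact Submonoid.FG.map_injective f hf h

theorem FG.comap_of_le_range {P : Subgroup G'} (hP : P.FG) {f : G →* G'}
    (hf : Function.Injective f) (hle : P ≤ f.range) : (P.comap f).FG :=
  .of_map_injective hf (by rwa [map_comap_eq_self hle])

theorem FG.exists_support_subset {α M : Type*} [AddCommGroup M]
    {P : Subgroup (Multiplicative (α →₀ M))} (hP : P.FG) :
    ∃ s : Finset α, ∀ x ∈ P, ↑x.toAdd.support ⊆ (s : Set α) := by
  classical
  obtain ⟨S, rfl⟩ := hP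
  let s : Finset α := S.sup fun x ↦ x.toAdd.support
  let V : Subgroup (Multiplicative (α →₀ M)) :=
    AddSubgroup.toSubgroup (Finsupp.supported M ℤ (s : Set α)).toAddSubgroup
  have hV : closure (S : Set _) ≤ V := closure_le _ |>.2 fun y hy ↦
    (mem_supported ℤ _).2 <| Finset.coe_subset.2 <| Finset.le_sup (f := fun x ↦ x.toAdd.support) hy
  exact ⟨s, fun x hx ↦ (mem_supported ℤ _).1 (hV hx)⟩

theorem not_fg_of_forall_apply_ne_zero {α M : Type*} [Infinite α] [AddCommGroup M]
    {P : Subgroup (Multiplicative (α →₀ M))} (h : ∀ a, ∃ x ∈ P, x.toAdd a ≠ 0) : ¬ P.FG := by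
  intro hP
  obtain ⟨s, hs⟩ := hP.exists_support_subset
  obtain ⟨a, ha⟩ := Infinite.exists_notMem_finset s
  obtain ⟨x, hx, hxa⟩ := h a
  exact ha (hs x hx (Finsupp.mem_support_iff.2 hxa))

end Subgroup

section IntWreath

variable (G : Type*) [Group G]

attribute [local instance] Finsupp.comapDistribMulAction in
noncomputable def translationAut : G →* MulAut (Multiplicative (G →₀ ℤ)) :=
  (MulAutMultiplicative _).symm.toMonoidHom.comp (DistribMulAction.toAddAut G (G →₀ ℤ))

/-- `ℤ ≀ G`, with base `G →₀ ℤ` on which `G` acts by left translation. -/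
abbrev IntWreath := Multiplicative (G →₀ ℤ) ⋊[translationAut G] G

variable {G}

theorem translationAut_single (g h : G) (m : ℤ) :
    translationAut G g (.ofAdd (single h m)) = .ofAdd (single (g * h) m) := by
  let := Finsupp.comapDistribMulAction (G := G) (α := G) (M := ℤ)
  exact congrArg Multiplicative.ofAdd (comapSMul_single g h m)

theorem IntWreath.inl_single (g : G) (m : ℤ) :
    (inl (.ofAdd (single g m)) : IntWreath G) = inr g * inl (.ofAdd (single 1 m)) * inr g⁻¹ := by
  rw [← inl_aut, translationAut_single, mul_one]

end IntWreath

namespace FreeGroup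

variable {ι : Type*} [DecidableEq ι]

noncomputable def toIntWreath (i₀ : ι) : FreeGroup ι →* IntWreath (Multiplicative ℤ) :=
  lift fun i ↦ if i = i₀ then inr (.ofAdd 1) else inl (.ofAdd (single 1 1))

theorem toIntWreath_conj {i₀ j : ι} (hj : j ≠ i₀) (n : ℤ) :
    toIntWreath i₀ (of i₀ ^ n * of j * (of i₀ ^ n)⁻¹) = inl (.ofAdd (single (.ofAdd n) 1)) := by
  have hpow : (Multiplicative.ofAdd (1 : ℤ)) ^ n = .ofAdd n := by simp [← ofAdd_zsmul]
  rw [IntWreath.inl_single, _root_.map_mul, _root_.map_mul, _root_.map_inv, map_zpow, toIntWreath,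
    lift_apply_of, lift_apply_of, if_pos rfl, if_neg hj, ← map_zpow, hpow, _root_.map_inv]

theorem not_fg_ker_toIntWreath [Nontrivial ι] (i₀ : ι) :
    ¬ (rightHom.comp (toIntWreath i₀)).ker.FG := by
  intro hK
  set K := (rightHom.comp (toIntWreath i₀)).ker
  obtain ⟨j, hj⟩ := exists_ne i₀
  have hle : K.map (toIntWreath i₀) ≤ (inl : _ →* IntWreath (Multiplicative ℤ)).range := by
    rw [range_inl_eq_ker_rightHom, Subgroup.map_le_iff_le_comap, MonoidHom.comap_ker]
  refine Subgroup.not_fg_of_forall_apply_ne_zero (fun a ↦ ?_)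
    ((hK.map _).comap_of_le_range inl_injective hle)
  refine ⟨.ofAdd (single a 1), ⟨of i₀ ^ a.toAdd * of j * (of i₀ ^ a.toAdd)⁻¹, ?_, ?_⟩, by simp⟩
  · simp [K, toIntWreath_conj hj]
  · simpa using toIntWreath_conj hj a.toAdd

end FreeGroup

theorem MonoidHom.range_inl_inf_range_graph {F Q : Type*} [Group F] [Group Q] (ψ : F →* Q) :
    (inl F Q).range ⊓ ((MonoidHom.id F).prod ψ).range = ψ.ker.map (inl F Q) := by
  ext ⟨g, q⟩
  simp only [Subgroup.mem_inf, mem_range, Subgroup.mem_map, mem_ker, inl_apply, prod_apply,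
    id_apply, Prod.mk.injEq]
  constructor
  · rintro ⟨⟨g', rfl, rfl⟩, g'', rfl, h⟩
    exact ⟨g'', h, rfl, rfl⟩
  · rintro ⟨g', h, rfl, rfl⟩
    exact ⟨⟨g', rfl, rfl⟩, g', rfl, h⟩

theorem not_fg_range_inl_inf_range_graph {F Q : Type*} [Group F] [Group Q] {ψ : F →* Q}
    (hψ : ¬ ψ.ker.FG) : ¬ ((MonoidHom.inl F Q).range ⊓ ((MonoidHom.id F).prod ψ).range).FG := by
  rw [MonoidHom.range_inl_inf_range_graph]
  exact fun h ↦ hψ (h.of_map_injective fun _ _ ↦ congrArg Prod.fst)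

/-- `F × ℤ` with `F` free of rank `≥ 2` fails the FGIP. -/
theorem stmt_10 {r : ℕ} (hr : 2 ≤ r) :
    ∃ H K : Subgroup (FreeGroup (Fin r) × Multiplicative ℤ),
      H.FG ∧ K.FG ∧ ¬ (H ⊓ K).FG := by
  have : Nontrivial (Fin r) := Fin.nontrivial_iff_two_le.2 hr
  let φ := rightHom.comp (FreeGroup.toIntWreath (⟨0, by omega⟩ : Fin r))
  exact ⟨_, _, (Group.fg_iff_subgroup_fg _).1 inferInstance,
    (Group.fg_iff_subgroup_fg _).1 (Group.fg_range ((MonoidHom.id _).prod φ)),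
    not_fg_range_inl_inf_range_graph (FreeGroup.not_fg_ker_toIntWreath _)⟩
end

section
/- The ping-pong lemma: let a group G act on a set X, let a, b ∈ G, and let A, B ⊆ X be nonempty disjoint subsets such that a^n(B) ⊆ A for all n ≠ 0 and b^n(A) ⊆ B for all n ≠ 0. Then the subgroup ⟨a, b⟩ of G is free of rank 2, freely generated by a and b. -/
/-!
A free group is the free product of infinite cyclic groups, one per generator, so it suffices to
apply the ping-pong lemma for free products (`Monoid.CoprodI.lift_injective_of_ping_pong`) to the
cyclic groups `⟨a⟩` and `⟨b⟩` playing ping-pong on `A` and `B`. The cardinality side condition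
of that lemma holds because each factor `FreeGroup Unit ≃ ℤ` is infinite.
-/

open Function Cardinal

namespace FreeGroup

theorem exists_of_unit_zpow_eq (h : FreeGroup Unit) : ∃ n : ℤ, of () ^ n = h :=
  ⟨freeGroupUnitEquivInt h, freeGroupUnitEquivInt.symm_apply_apply h⟩

theorem lift_eq_coprodI_lift_comp {ι G : Type*} [Group G] (a : ι → G) :
    lift a = (Monoid.CoprodI.lift fun i => lift fun _ : Unit => a i).comp
      freeGroupEquivCoprodI.toMonoidHom := by
  ext i
  simp

theorem injective_lift_of_ping_pong_zpow {ι G α : Type*} [Nontrivial ι] [Group G]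
    [MulAction G α] (a : ι → G) (X : ι → Set α) (hXnonempty : ∀ i, (X i).Nonempty)
    (hXdisj : Pairwise (Disjoint on X))
    (hpp : Pairwise fun i j => ∀ n : ℤ, n ≠ 0 → ∀ x ∈ X j, a i ^ n • x ∈ X i) :
    Injective (lift a) := by
  rw [lift_eq_coprodI_lift_comp, MonoidHom.coe_comp]
  refine (Monoid.CoprodI.lift_injective_of_ping_pong _ ?_ X hXnonempty hXdisj ?_).comp
    freeGroupEquivCoprodI.injective
  · obtain ⟨i⟩ := ‹Nontrivial ι›.to_nonempty
    exact Or.inr ⟨i, natCast_lt_aleph0.le.trans (infinite_iff.mp inferInstance)⟩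
  · rintro i j hij h hne _ ⟨x, hx, rfl⟩
    obtain ⟨n, rfl⟩ := exists_of_unit_zpow_eq h
    have hn : n ≠ 0 := by
      rintro rfl
      exact hne (zpow_zero _)
    simpa using hpp hij n hn x hx

end FreeGroup

/-- ping-pong lemma: if `a^n B ⊆ A` and `b^n A ⊆ B` for all `n ≠ 0`,
with `A, B` nonempty and disjoint, then `a` and `b` freely generate a free subgroup. -/
theorem stmt_16 {G X : Type*} [Group G] [MulAction G X] (a b : G)
    (A B : Set X) (hA : A.Nonempty) (hB : B.Nonempty) (hdisj : Disjoint A B)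
    (ha : ∀ n : ℤ, n ≠ 0 → ∀ x ∈ B, (a ^ n) • x ∈ A)
    (hb : ∀ n : ℤ, n ≠ 0 → ∀ x ∈ A, (b ^ n) • x ∈ B) :
    Function.Injective
      (FreeGroup.lift (fun c : Bool => if c then a else b) : FreeGroup Bool →* G) := by
  apply FreeGroup.injective_lift_of_ping_pong_zpow _ (fun c : Bool => if c then A else B)
  · rintro (_ | _) <;> assumption
  · rintro (_ | _) (_ | _) hij
    all_goals simp_all [onFun, hdisj.symm]
  · rintro (_ | _) (_ | _) hij
    all_goals simp_all
end
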